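/- The Almgren frequency function satisfies N(r) > −(N−1)/4 for every r ∈ (0, r₀]; more precisely, N(r) ≥ −C r^ε for every r ∈ (0, r₀], where C and ε are the constant and exponent of the coercivity lemma. -/

import Mathlib

open MeasureTheory Metric Filter Real
open scoped Topology ENNReal NNReal

noncomputable section

namespace CrackPaper

/-- The ambient Euclidean space `ℝ^{N+1}`. -/
abbrev Euc (N : ℕ) : Type := EuclideanSpace ℝ (Fin (N + 1))

/-- Partial derivative of `φ` in the `i`-th coordinate direction. -/
def pd (N : ℕ) (φ : Euc N → ℝ) (i : Fin (N + 1)) (x : Euc N) : ℝ :=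
  fderiv ℝ φ x (EuclideanSpace.single i 1)

/-- Smooth test functions compactly supported inside `Ω`. -/
def IsTest (N : ℕ) (Ω : Set (Euc N)) (φ : Euc N → ℝ) : Prop :=
  ContDiff ℝ (⊤ : ℕ∞) φ ∧ HasCompactSupport φ ∧ tsupport φ ⊆ Ω

/-- `g` is the weak (distributional) gradient of `u` on the open set `Ω`. -/
def HasWeakGrad (N : ℕ) (Ω : Set (Euc N)) (u : Euc N → ℝ)
    (g : Euc N → Fin (N + 1) → ℝ) : Prop :=
  ∀ φ : Euc N → ℝ, IsTest N Ω φ → ∀ i : Fin (N + 1),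
    ∫ x in Ω, u x * pd N φ i x = - ∫ x in Ω, g x i * φ x

/-- `u ∈ H¹(Ω)` with weak gradient `g`. -/
def MemH1 (N : ℕ) (Ω : Set (Euc N)) (u : Euc N → ℝ)
    (g : Euc N → Fin (N + 1) → ℝ) : Prop :=
  HasWeakGrad N Ω u g ∧ IntegrableOn (fun x => (u x) ^ 2) Ω volume ∧
    IntegrableOn (fun x => ∑ i, (g x i) ^ 2) Ω volume

/-- `u ∈ H¹_Γ(Ω)`: an `H¹(Ω)` function which is the `H¹`-limit of smooth
functions vanishing in a neighbourhood of `Γ` (zero trace on `Γ`). -/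
def MemH1Zero (N : ℕ) (Ω Γ : Set (Euc N)) (u : Euc N → ℝ)
    (g : Euc N → Fin (N + 1) → ℝ) : Prop :=
  MemH1 N Ω u g ∧ ∃ v : ℕ → Euc N → ℝ,
    (∀ n, ContDiff ℝ (⊤ : ℕ∞) (v n)) ∧
    (∀ n, ∃ O : Set (Euc N), IsOpen O ∧ Γ ⊆ O ∧ ∀ x ∈ O, v n x = 0) ∧
    Tendsto (fun n => ∫ x in Ω,
      ((v n x - u x) ^ 2 + ∑ i, (pd N (v n) i x - g x i) ^ 2)) atTop (𝓝 0)

/-- `u ∈ H¹₀(Ω)`: `H¹`-limit of test functions on `Ω`. -/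
def MemH10 (N : ℕ) (Ω : Set (Euc N)) (u : Euc N → ℝ)
    (g : Euc N → Fin (N + 1) → ℝ) : Prop :=
  MemH1 N Ω u g ∧ ∃ v : ℕ → Euc N → ℝ,
    (∀ n, IsTest N Ω (v n)) ∧
    Tendsto (fun n => ∫ x in Ω,
      ((v n x - u x) ^ 2 + ∑ i, (pd N (v n) i x - g x i) ^ 2)) atTop (𝓝 0)

/-- Surface integral over the sphere `∂B_r` (N-dimensional Hausdorff measure). -/
def sInt (N : ℕ) (r : ℝ) (F : Euc N → ℝ) : ℝ :=
  ∫ x in sphere (0 : Euc N) r, F x ∂(μH[(N : ℝ)])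

/-- The straightened crack `Γ̃ = {x_N ≥ 0, x_{N+1} = 0}`. -/
def crack (N : ℕ) : Set (Euc N) :=
  {x : Euc N | 0 ≤ x ⟨N - 1, by omega⟩ ∧ x ⟨N, by omega⟩ = 0}

/-- The vector field `A∇u`. -/
def Avec (N : ℕ) (A : Euc N → Matrix (Fin (N + 1)) (Fin (N + 1)) ℝ)
    (g : Euc N → Fin (N + 1) → ℝ) (x : Euc N) (i : Fin (N + 1)) : ℝ :=
  ∑ j, A x i j * g x j

/-- The quadratic form `A∇u·∇v`. -/
def Aquad (N : ℕ) (A : Euc N → Matrix (Fin (N + 1)) (Fin (N + 1)) ℝ)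
    (g h : Euc N → Fin (N + 1) → ℝ) (x : Euc N) : ℝ :=
  ∑ i, Avec N A g x i * h x i

/-- `A∇u·ν`, where `ν = x/|x|`. -/
def AvecNu (N : ℕ) (A : Euc N → Matrix (Fin (N + 1)) (Fin (N + 1)) ℝ)
    (g : Euc N → Fin (N + 1) → ℝ) (x : Euc N) : ℝ :=
  (∑ i, Avec N A g x i * x i) / ‖x‖

open Classical in
/-- `μ(x) = A(x)x·x/|x|²`, with `μ(0) = 1`. -/
def muA (N : ℕ) (A : Euc N → Matrix (Fin (N + 1)) (Fin (N + 1)) ℝ) (x : Euc N) : ℝ :=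
  if x = 0 then 1 else (∑ i, (∑ j, A x i j * x j) * x i) / ‖x‖ ^ 2

/-- Structural assumptions on the symmetric matrix field `A`:
Lipschitz continuity, `A(x) − Id = O(|x|)`, ellipticity `A(x)y·y ≥ |y|²/2`
and the bound `‖A(x)‖ ≤ 2` (as quadratic bound `|A(x)y|² ≤ 4|y|²`). -/
structure MatrixHyp (N : ℕ) (rt : ℝ)
    (A : Euc N → Matrix (Fin (N + 1)) (Fin (N + 1)) ℝ) : Prop where
  symm : ∀ x, (A x).IsSymm
  lip : ∀ i j, ∃ L : ℝ≥0, LipschitzOnWith L (fun x => A x i j) (ball (0 : Euc N) rt)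
  idO : ∃ C : ℝ, 0 < C ∧ ∀ x ∈ ball (0 : Euc N) rt, ∀ i j,
    |A x i j - (if i = j then 1 else 0)| ≤ C * ‖x‖
  ell : ∀ x ∈ ball (0 : Euc N) rt, ∀ y : Fin (N + 1) → ℝ,
    (1 / 2) * ∑ i, (y i) ^ 2 ≤ ∑ i, (∑ j, A x i j * y j) * y i
  bdd : ∀ x ∈ ball (0 : Euc N) rt, ∀ y : Fin (N + 1) → ℝ,
    ∑ i, (∑ j, A x i j * y j) ^ 2 ≤ 4 * ∑ i, (y i) ^ 2

/-- Assumption (a1): `f(x) = O(|x|^{-2+δ})` as `|x| → 0⁺`. -/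
def Assump1 (N : ℕ) (f : Euc N → ℝ) (δ : ℝ) : Prop :=
  0 < δ ∧ ∃ C : ℝ, 0 < C ∧ ∃ ρ : ℝ, 0 < ρ ∧ ∀ x : Euc N, ‖x‖ ≤ ρ → x ≠ 0 →
    |f x| ≤ C * ‖x‖ ^ (-2 + δ)

/-- Assumption (a2): `f ∈ W^{1,p}(B_{rt})`, with weak gradient `gf`,
for some `p > (N+1)/2`. -/
def Assump2 (N : ℕ) (rt : ℝ) (f : Euc N → ℝ) (gf : Euc N → Fin (N + 1) → ℝ)
    (p : ℝ) : Prop :=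
  ((N : ℝ) + 1) / 2 < p ∧ HasWeakGrad N (ball (0 : Euc N) rt) f gf ∧
    MemLp f (ENNReal.ofReal p) (volume.restrict (ball (0 : Euc N) rt)) ∧
    ∀ i, MemLp (fun x => gf x i) (ENNReal.ofReal p)
      (volume.restrict (ball (0 : Euc N) rt))

/-- `f ∈ L^∞_loc(B_{rt} \ {0})`. -/
def LocBdd (N : ℕ) (rt : ℝ) (f : Euc N → ℝ) : Prop :=
  ∀ K : Set (Euc N), IsCompact K → K ⊆ ball (0 : Euc N) rt \ {0} →
    ∃ C : ℝ, ∀ x ∈ K, |f x| ≤ C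

/-- `U ∈ H¹_Γ̃(B_{rt})` is a weak solution to `-div(A∇U) = f U` in `B_{rt} \ Γ̃`
with `U = 0` on `Γ̃` (zero trace). -/
def IsWeakSolution (N : ℕ) (rt : ℝ)
    (A : Euc N → Matrix (Fin (N + 1)) (Fin (N + 1)) ℝ) (f : Euc N → ℝ)
    (U : Euc N → ℝ) (gU : Euc N → Fin (N + 1) → ℝ) : Prop :=
  MemH1Zero N (ball (0 : Euc N) rt) (crack N ∩ ball (0 : Euc N) rt) U gU ∧
  ∀ φ, IsTest N (ball (0 : Euc N) rt \ crack N) φ →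
    ∫ x in ball (0 : Euc N) rt, Aquad N A gU (fun y i => pd N φ i y) x
      = ∫ x in ball (0 : Euc N) rt, f x * U x * φ x

/-- The energy function `D(r)`. -/
def Dfun (N : ℕ) (A : Euc N → Matrix (Fin (N + 1)) (Fin (N + 1)) ℝ)
    (f U : Euc N → ℝ) (gU : Euc N → Fin (N + 1) → ℝ) (r : ℝ) : ℝ :=
  (1 / r ^ (N - 1)) *
    ((∫ x in ball (0 : Euc N) r, Aquad N A gU gU x) -
      ∫ x in ball (0 : Euc N) r, f x * (U x) ^ 2)

/-- The height function `H(r)`. -/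
def Hfun (N : ℕ) (A : Euc N → Matrix (Fin (N + 1)) (Fin (N + 1)) ℝ)
    (U : Euc N → ℝ) (r : ℝ) : ℝ :=
  (1 / r ^ N) * sInt N r (fun x => muA N A x * (U x) ^ 2)

/-- The Almgren frequency function `𝒩(r) = D(r)/H(r)`. -/
def Nfun (N : ℕ) (A : Euc N → Matrix (Fin (N + 1)) (Fin (N + 1)) ℝ)
    (f U : Euc N → ℝ) (gU : Euc N → Fin (N + 1) → ℝ) (r : ℝ) : ℝ :=
  Dfun N A f U gU r / Hfun N A U r

/-- The coercivity inequality (the lemma defining `r₀`), with constant `C`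
and exponent `ε`: for every `r ∈ (0, r₀]` and every `u ∈ H¹(B_r)`,
`(1/4)∫|∇u|² ≤ ∫A∇u·∇u − ∫|f|u² + C r^{−1+ε} ∫_{∂B_r} μ u²`. -/
def Coercive (N : ℕ) (A : Euc N → Matrix (Fin (N + 1)) (Fin (N + 1)) ℝ)
    (f : Euc N → ℝ) (C ε r₀ : ℝ) : Prop :=
  ∀ r : ℝ, 0 < r → r ≤ r₀ → ∀ u : Euc N → ℝ, ∀ g : Euc N → Fin (N + 1) → ℝ,
    MemH1 N (ball (0 : Euc N) r) u g →
    (1 / 4) * (∫ x in ball (0 : Euc N) r, ∑ i, (g x i) ^ 2) ≤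
      (∫ x in ball (0 : Euc N) r, Aquad N A g g x) -
      (∫ x in ball (0 : Euc N) r, |f x| * (u x) ^ 2) +
      C * r ^ (-1 + ε) * sInt N r (fun x => muA N A x * (u x) ^ 2)

/-- `β(x) = A(x)x/μ(x)` (component `i`). -/
def betaV (N : ℕ) (A : Euc N → Matrix (Fin (N + 1)) (Fin (N + 1)) ℝ)
    (x : Euc N) (i : Fin (N + 1)) : ℝ :=
  (∑ j, A x i j * x j) / muA N A x

/-- `(Jac β)_{ik} = ∂β_i/∂x_k`. -/
def jacBeta (N : ℕ) (A : Euc N → Matrix (Fin (N + 1)) (Fin (N + 1)) ℝ)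
    (x : Euc N) (i k : Fin (N + 1)) : ℝ :=
  fderiv ℝ (fun y => betaV N A y i) x (EuclideanSpace.single k 1)

/-- `div β`. -/
def divBeta (N : ℕ) (A : Euc N → Matrix (Fin (N + 1)) (Fin (N + 1)) ℝ)
    (x : Euc N) : ℝ := ∑ i, jacBeta N A x i i

/-- `dA(x) v w`, the vector with components `∑_{i,j} ∂_k a_{ij} v_i w_j` for
`k = 1, …, N` and last component `0`. -/
def dAvec (N : ℕ) (A : Euc N → Matrix (Fin (N + 1)) (Fin (N + 1)) ℝ)
    (x : Euc N) (v w : Fin (N + 1) → ℝ) (k : Fin (N + 1)) : ℝ :=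
  if (k : ℕ) = N then 0
  else ∑ i, ∑ j, fderiv ℝ (fun y => A y i j) x (EuclideanSpace.single k 1) * v i * w j

/-- Local absolute continuity on `(a,b)` with locally integrable derivative
`F'`, i.e. `F ∈ W^{1,1}_loc(a,b)` and `F'` is its weak derivative. -/
def W11loc (F F' : ℝ → ℝ) (a b : ℝ) : Prop :=
  (∀ c d : ℝ, a < c → c ≤ d → d < b → IntegrableOn F' (Set.Icc c d) volume) ∧
  ∀ c d : ℝ, a < c → c ≤ d → d < b → F d = F c + ∫ t in c..d, F' t


/-- the Almgren frequency satisfies `𝒩(r) ≥ −C r^ε`, and in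
particular `𝒩(r) > −(N−1)/4`, for every `r ∈ (0, r₀]`, where `C`, `ε` are the
constant and exponent of the coercivity lemma. -/
theorem statement8
    (N : ℕ) (hN : 2 ≤ N) (rt : ℝ) (hrt : 0 < rt)
    (A : Euc N → Matrix (Fin (N + 1)) (Fin (N + 1)) ℝ) (hA : MatrixHyp N rt A)
    (f : Euc N → ℝ) (hfloc : LocBdd N rt f)
    (ε : ℝ)
    (hf : (∃ δ : ℝ, Assump1 N f δ ∧ ε = δ) ∨
      (∃ p : ℝ, ∃ gf : Euc N → Fin (N + 1) → ℝ, Assump2 N rt f gf p ∧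
        ε = (2 * p - (N : ℝ) - 1) / p))
    (U : Euc N → ℝ) (gU : Euc N → Fin (N + 1) → ℝ)
    (hU : IsWeakSolution N rt A f U gU)
    (hU0 : ¬ U =ᵐ[volume.restrict (ball (0 : Euc N) rt)] 0)
    (r₀ : ℝ) (hr₀ : 0 < r₀ ∧ r₀ < rt)
    (C : ℝ) (hC : 0 < C) (hε : 0 < ε)
    (hcoer : Coercive N A f C ε r₀) (hsmall : C * r₀ ^ ε < ((N : ℝ) - 1) / 4)
    :
    (∀ r : ℝ, 0 < r → r ≤ r₀ → -(C * r ^ ε) ≤ Nfun N A f U gU r) ∧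
    (∀ r : ℝ, 0 < r → r ≤ r₀ → -(((N : ℝ) - 1) / 4) < Nfun N A f U gU r) := by
  have hr0t : r₀ < rt := hr₀.2
  -- main inequality
  have key : ∀ r : ℝ, 0 < r → r ≤ r₀ → -(C * r ^ ε) ≤ Nfun N A f U gU r := by
    intro r hr0 hrr₀
    have hrlt : r < rt := lt_of_le_of_lt hrr₀ hr0t
    have hsub : ball (0 : Euc N) r ⊆ ball (0 : Euc N) rt := ball_subset_ball hrlt.le
    -- restrict MemH1 to the smaller ball
    have hmem_rt : MemH1 N (ball (0 : Euc N) rt) U gU := hU.1.1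
    have hmem : MemH1 N (ball (0 : Euc N) r) U gU := by
      refine ⟨?_, hmem_rt.2.1.mono_set hsub, hmem_rt.2.2.mono_set hsub⟩
      intro φ hφ i
      have hφ' : IsTest N (ball (0 : Euc N) rt) φ := ⟨hφ.1, hφ.2.1, hφ.2.2.trans hsub⟩
      have h := hmem_rt.1 φ hφ' i
      have e1 : ∫ x in ball (0 : Euc N) rt, U x * pd N φ i x
          = ∫ x in ball (0 : Euc N) r, U x * pd N φ i x := by
        refine setIntegral_eq_of_subset_of_forall_diff_eq_zero measurableSet_ball hsub ?_
        intro x hx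
        have hx' : x ∉ tsupport φ := fun hxs => hx.2 (hφ.2.2 hxs)
        have : pd N φ i x = 0 := by
          unfold pd; rw [fderiv_of_notMem_tsupport ℝ hx']; simp
        simp [this]
      have e2 : ∫ x in ball (0 : Euc N) rt, gU x i * φ x
          = ∫ x in ball (0 : Euc N) r, gU x i * φ x := by
        refine setIntegral_eq_of_subset_of_forall_diff_eq_zero measurableSet_ball hsub ?_
        intro x hx
        have hx' : x ∉ tsupport φ := fun hxs => hx.2 (hφ.2.2 hxs)
        simp [image_eq_zero_of_notMem_tsupport hx']
      rw [← e1, ← e2]; exact h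
    have hco := hcoer r hr0 hrr₀ U gU hmem
    -- notation
    set S : ℝ := sInt N r (fun x => muA N A x * (U x) ^ 2) with hS_def
    set IA : ℝ := ∫ x in ball (0 : Euc N) r, Aquad N A gU gU x with hIA_def
    set If : ℝ := ∫ x in ball (0 : Euc N) r, f x * (U x) ^ 2 with hIf_def
    set Ifa : ℝ := ∫ x in ball (0 : Euc N) r, |f x| * (U x) ^ 2 with hIfa_def
    -- gradient term nonneg
    have hgrad : 0 ≤ ∫ x in ball (0 : Euc N) r, ∑ i, (gU x i) ^ 2 := by
      refine setIntegral_nonneg measurableSet_ball fun x _ => ?_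
      exact Finset.sum_nonneg fun i _ => sq_nonneg _
    -- ∫ f U² ≤ ∫ |f| U²
    have hf_le : If ≤ Ifa := by
      by_cases hint : IntegrableOn (fun x => f x * (U x) ^ 2) (ball (0 : Euc N) r) volume
      · have habs : IntegrableOn (fun x => |f x| * (U x) ^ 2) (ball (0 : Euc N) r) volume := by
          have := hint.abs
          simp only [abs_mul, abs_pow, sq_abs] at this; exact this
        exact integral_mono hint habs fun x =>
          mul_le_mul_of_nonneg_right (le_abs_self _) (sq_nonneg _)
      · rw [hIf_def, integral_undef hint]
        rw [hIfa_def]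
        refine setIntegral_nonneg measurableSet_ball fun x _ => ?_
        exact mul_nonneg (abs_nonneg _) (sq_nonneg _)
    -- S ≥ 0
    have hSnn : 0 ≤ S := by
      rw [hS_def]
      refine setIntegral_nonneg (isClosed_sphere.measurableSet) fun x hx => ?_
      have hxr : ‖x‖ = r := by simpa [mem_sphere_zero_iff_norm] using hx
      have hx0 : x ≠ 0 := by
        intro h; rw [h] at hxr; simp at hxr; exact hr0.ne' hxr.symm
      have hxball : x ∈ ball (0 : Euc N) rt := by
        rw [mem_ball_zero_iff, hxr]; exact hrlt
      have hell := hA.ell x hxball (fun i => x i)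
      have hmu : 0 ≤ muA N A x := by
        rw [muA, if_neg hx0]
        refine div_nonneg ?_ (by positivity)
        have : 0 ≤ (1 / 2) * ∑ i, (x i) ^ 2 := by positivity
        linarith
      exact mul_nonneg hmu (sq_nonneg _)
    -- from coercivity
    have hkey : -(C * r ^ (-1 + ε) * S) ≤ IA - If := by
      have h14 : 0 ≤ (1 / 4) * ∫ x in ball (0 : Euc N) r, ∑ i, (gU x i) ^ 2 := by linarith
      linarith
    -- power identity
    have hN1 : N = (N - 1) + 1 := by omega
    have hrpowN : r ^ N = r ^ (N - 1) * r := by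
      conv_lhs => rw [hN1]
      rw [pow_succ]
    have h3 : r ^ (-1 + ε) * r = r ^ ε := by
      have := (Real.rpow_add hr0 (-1 + ε) 1).symm
      rw [Real.rpow_one] at this
      rw [this]; ring_nf
    have hpne : (r : ℝ) ^ (N - 1) ≠ 0 := pow_ne_zero _ hr0.ne'
    have hpow : (1 / r ^ (N - 1)) * (C * r ^ (-1 + ε)) = C * r ^ ε * (1 / r ^ N) := by
      rw [hrpowN]
      field_simp
      linear_combination h3
    -- D ≥ -(C r^ε) H
    have hDH : -(C * r ^ ε) * Hfun N A U r ≤ Dfun N A f U gU r := by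
      have hpos : (0 : ℝ) < 1 / r ^ (N - 1) := by positivity
      have step : (1 / r ^ (N - 1)) * (-(C * r ^ (-1 + ε) * S)) ≤ (1 / r ^ (N - 1)) * (IA - If) := by
        have := mul_le_mul_of_nonneg_left (by linarith : -(C * r ^ (-1 + ε) * S) ≤ IA - If) hpos.le
        exact this
      have hDval : Dfun N A f U gU r = (1 / r ^ (N - 1)) * (IA - If) := rfl
      have hHval : Hfun N A U r = (1 / r ^ N) * S := rfl
      rw [hDval, hHval]
      calc -(C * r ^ ε) * ((1 / r ^ N) * S)
          = (1 / r ^ (N - 1)) * (-(C * r ^ (-1 + ε) * S)) := by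
            linear_combination S * hpow
        _ ≤ (1 / r ^ (N - 1)) * (IA - If) := step
    -- conclude
    have hHnn : 0 ≤ Hfun N A U r := by
      have hHval : Hfun N A U r = (1 / r ^ N) * S := rfl
      rw [hHval]
      exact mul_nonneg (by positivity) hSnn
    rcases hHnn.eq_or_lt with hH | hH
    · have : Nfun N A f U gU r = 0 := by
        rw [Nfun, ← hH, div_zero]
      rw [this]
      have : 0 < C * r ^ ε := mul_pos hC (Real.rpow_pos_of_pos hr0 ε)
      linarith
    · rw [Nfun, le_div_iff₀ hH]
      exact hDH
  refine ⟨key, fun r hr0 hrr₀ => ?_⟩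
  have h1 := key r hr0 hrr₀
  have h2 : C * r ^ ε ≤ C * r₀ ^ ε :=
    mul_le_mul_of_nonneg_left (Real.rpow_le_rpow hr0.le hrr₀ hε.le) hC.le
  linarith


end CrackPaper
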